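/- Let r ≥ 1, let {x_{ij} : 1 ≤ i ≤ j ≤ r} be independent commuting indeterminates, and let N be the r×r matrix with N_{ij} = x_{min(i,j), max(i,j)}. For a fixed u ∈ S_r, the number of permutations u' ∈ S_r with ∏_{j=1}^r N_{j, u'(j)} = ∏_{j=1}^r N_{j, u(j)} equals 2^k, where k is the number of cycles of u of length at least 3. -/

import Mathlib

/-!
The product `∏ j, N j (u' j)` is the monomial recording the multiset of edges `{j, u' j}` of the
functional graph of `u'`. The edges through a point `a` then show that `u'` gives `a` the same
neighbours `{u a, u⁻¹ a}` as `u`, and once `u'` agrees with `u` (or with `u⁻¹`) at one point of a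
cycle of `u`, it does so along the whole cycle. On cycles of length at most 2 the two options
coincide, so `u'` is determined by the set of long cycles of `u` that it reverses, and reversing
any set of cycles of `u` keeps the edges.
-/

open Equiv Equiv.Perm Finset MvPolynomial

namespace Equiv.Perm

variable {α : Type*}

def SameNeighbors (u u' : Perm α) : Prop :=
  ∀ a, ({u' a, u'⁻¹ a} : Multiset α) = {u a, u⁻¹ a}

namespace SameNeighbors

variable {u u' : Perm α}

theorem inv (H : SameNeighbors u u') : SameNeighbors u⁻¹ u' := fun a => by
  rw [H a, inv_inv, Multiset.pair_comm]

theorem apply_eq_or (H : SameNeighbors u u') (a : α) : u' a = u a ∨ u' a = u⁻¹ a := by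
  have : u' a ∈ ({u a, u⁻¹ a} : Multiset α) := H a ▸ Multiset.mem_cons_self _ _
  simpa using this

theorem apply_apply_eq (H : SameNeighbors u u') {a : α} (ha : u' a = u a) :
    u' (u a) = u (u a) := by
  have h := H (u a)
  rw [show u'⁻¹ (u a) = a from inv_eq_iff_eq.mpr ha.symm, show u⁻¹ (u a) = a from
    inv_eq_iff_eq.mpr rfl, Multiset.pair_comm (u' _), Multiset.pair_comm (u _)] at h
  simpa using h

theorem apply_eq_of_sameCycle [Finite α] (H : SameNeighbors u u') {a b : α}
    (hab : u.SameCycle a b) (ha : u' a = u a) : u' b = u b := by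
  obtain ⟨n, -, rfl⟩ := hab.exists_pow_eq'
  clear hab
  induction n with
  | zero => simpa using ha
  | succ n ih => simpa only [pow_succ', mul_apply] using H.apply_apply_eq ih

end SameNeighbors

section Cycles

variable [DecidableEq α] [Fintype α]

theorem inv_apply_eq_apply_iff_card_support_cycleOf_le_two {u : Perm α} {a : α} :
    u⁻¹ a = u a ↔ #(u.cycleOf a).support ≤ 2 := by
  by_cases ha : u a = a
  · have : u⁻¹ a = a := inv_eq_iff_eq.mpr ha.symm
    simp [ha, this, (cycleOf_eq_one_iff u).mpr ha]
  have h2 : 2 ≤ #(u.cycleOf a).support := two_le_card_support_cycleOf_iff.mpr ha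
  have key := zpow_eq_zpow_on_iff u (m := 2) (n := 0) ha
  rw [zpow_zero, one_apply, zpow_two, mul_apply, ← eq_inv_iff_eq, eq_comm, Int.zero_emod,
    ← Int.dvd_iff_emod_eq_zero] at key
  rw [key]
  constructor
  · intro h
    exact_mod_cast Int.le_of_dvd two_pos h
  · intro h
    rw [show #(u.cycleOf a).support = 2 by omega]
    rfl

def reverseCycles (u : Perm α) (T : Finset (Perm α)) : Perm α :=
  subtypeCongr (u.subtypePerm (p := (u.cycleOf · ∈ T)) (by simp [cycleOf_self_apply]))⁻¹
    (u.subtypePerm (p := (u.cycleOf · ∉ T)) (by simp [cycleOf_self_apply]))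

theorem reverseCycles_apply (u : Perm α) (T : Finset (Perm α)) (a : α) :
    reverseCycles u T a = if u.cycleOf a ∈ T then u⁻¹ a else u a := by
  rw [reverseCycles, subtypeCongr.apply]
  split_ifs <;> rfl

def longCycles (u : Perm α) : Finset (Perm α) :=
  {c ∈ u.cycleFactorsFinset | 3 ≤ #c.support}

def reversedCycles (u u' : Perm α) : Finset (Perm α) :=
  {c ∈ longCycles u | ∀ a ∈ c.support, u' a = u⁻¹ a}

theorem mem_longCycles {u c : Perm α} :
    c ∈ longCycles u ↔ c ∈ u.cycleFactorsFinset ∧ 3 ≤ #c.support :=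
  mem_filter

theorem mem_reversedCycles {u u' c : Perm α} :
    c ∈ reversedCycles u u' ↔
      (c ∈ u.cycleFactorsFinset ∧ 3 ≤ #c.support) ∧ ∀ a ∈ c.support, u' a = u⁻¹ a := by
  rw [reversedCycles, mem_filter, mem_longCycles]

theorem SameNeighbors.eq_reverseCycles {u u' : Perm α} (H : SameNeighbors u u') :
    reverseCycles u (reversedCycles u u') = u' := by
  ext a
  rw [reverseCycles_apply]
  split_ifs with h
  · obtain ⟨⟨hc, -⟩, hrev⟩ := mem_reversedCycles.mp h
    have ha : a ∈ u.support := cycleOf_mem_cycleFactorsFinset_iff.mp hc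
    exact (hrev a (mem_support_cycleOf_iff.mpr ⟨.refl u a, ha⟩)).symm
  · refine (H.apply_eq_or a).elim Eq.symm fun hinv => ?_
    by_contra hne
    have h3 : 3 ≤ #(u.cycleOf a).support := by
      have := inv_apply_eq_apply_iff_card_support_cycleOf_le_two.not.mp (hinv ▸ Ne.symm hne)
      omega
    have ha : a ∈ u.support := mem_support.mpr <| two_le_card_support_cycleOf_iff.mp (by omega)
    refine h (mem_reversedCycles.mpr ⟨⟨cycleOf_mem_cycleFactorsFinset_iff.mpr ha, h3⟩, ?_⟩)
    exact fun b hb => H.inv.apply_eq_of_sameCycle (mem_support_cycleOf_iff.mp hb).1.inv hinv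

theorem reversedCycles_reverseCycles {u : Perm α} {T : Finset (Perm α)} (hT : T ⊆ longCycles u) :
    reversedCycles u (reverseCycles u T) = T := by
  ext c
  refine ⟨fun hc => ?_, fun hc => ?_⟩
  · obtain ⟨⟨hcu, h3⟩, hrev⟩ := mem_reversedCycles.mp hc
    obtain ⟨a, ha⟩ := card_pos.mp (by omega : 0 < #c.support)
    have hca := cycle_is_cycleOf ha hcu
    by_contra hcT
    have := hrev a ha
    rw [reverseCycles_apply, ← hca, if_neg hcT, eq_comm,
      inv_apply_eq_apply_iff_card_support_cycleOf_le_two, ← hca] at this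
    omega
  · obtain ⟨hcu, h3⟩ := mem_longCycles.mp (hT hc)
    refine mem_reversedCycles.mpr ⟨⟨hcu, h3⟩, fun a ha => ?_⟩
    rw [reverseCycles_apply, ← cycle_is_cycleOf ha hcu, if_pos hc]

end Cycles

noncomputable section Edges

variable [LinearOrder α]

def edge (u : Perm α) (j : α) : α × α :=
  (min j (u j), max j (u j))

/-- A loop at `a` contributes `a` twice. -/
def edgeNeighbors (a : α) (p : α × α) : Multiset α :=
  (if p.1 = a then {p.2} else 0) + (if p.2 = a then {p.1} else 0)

def neighborsHom (a : α) : ((α × α) →₀ ℕ) →+ Multiset α :=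
  Finsupp.liftAddHom fun p => multiplesHom _ (edgeNeighbors a p)

theorem edgeNeighbors_edge (u : Perm α) (a j : α) :
    edgeNeighbors a (u.edge j) = (if j = a then {u j} else 0) + (if u j = a then {j} else 0) := by
  rcases le_total j (u j) with h | h
  · rw [edgeNeighbors, edge, min_eq_left h, max_eq_right h]
  · rw [edgeNeighbors, edge, min_eq_right h, max_eq_left h, add_comm]

variable [Fintype α]

def edgeCount (u : Perm α) : (α × α) →₀ ℕ :=
  ∑ j, Finsupp.single (u.edge j) 1

theorem prod_X_edge {R : Type*} [CommSemiring R] (u : Perm α) :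
    ∏ j, (X (u.edge j) : MvPolynomial (α × α) R) = monomial u.edgeCount 1 := by
  simp only [X, edgeCount, monomial_sum_one]

theorem prod_X_edge_eq_iff {R : Type*} [CommSemiring R] [Nontrivial R] {u u' : Perm α} :
    ∏ j, (X (u'.edge j) : MvPolynomial (α × α) R) = ∏ j, X (u.edge j) ↔
      u'.edgeCount = u.edgeCount := by
  rw [prod_X_edge, prod_X_edge]
  exact (monomial_left_injective one_ne_zero).eq_iff

theorem neighborsHom_edgeCount (u : Perm α) (a : α) :
    neighborsHom a u.edgeCount = {u a, u⁻¹ a} := by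
  simp only [edgeCount, map_sum, neighborsHom, Finsupp.liftAddHom_apply_single, multiplesHom_apply,
    one_nsmul, edgeNeighbors_edge, sum_add_distrib, Fintype.sum_ite_eq', ← eq_inv_iff_eq]
  rfl

theorem sameNeighbors_of_edgeCount_eq {u u' : Perm α} (h : u'.edgeCount = u.edgeCount) :
    SameNeighbors u u' := fun a => by
  rw [← neighborsHom_edgeCount, ← neighborsHom_edgeCount, h]

theorem edgeCount_reverseCycles (u : Perm α) (T : Finset (Perm α)) :
    (reverseCycles u T).edgeCount = u.edgeCount := by
  have hu : ∀ j, u.cycleOf (u j) = u.cycleOf j := cycleOf_self_apply u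
  have hu' : ∀ j, u.cycleOf (u⁻¹ j) = u.cycleOf j := fun j => by
    rw [← hu, coe_inv, apply_symm_apply]
  unfold edgeCount
  rw [← sum_filter_add_sum_filter_not univ (u.cycleOf · ∈ T),
    ← sum_filter_add_sum_filter_not univ (u.cycleOf · ∈ T)]
  congr 1
  · refine sum_nbij' (⇑u⁻¹) u (fun j hj => ?_) ?_ ?_ ?_ fun j hj => ?_
    · simpa [← coe_inv, hu'] using hj
    · simp [hu]
    · simp
    · simp
    · rw [mem_filter] at hj
      rw [edge, edge, reverseCycles_apply, if_pos hj.2, coe_inv, apply_symm_apply, min_comm,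
        max_comm]
  · refine sum_congr rfl fun j hj => ?_
    rw [mem_filter] at hj
    rw [edge, edge, reverseCycles_apply, if_neg hj.2]

theorem card_edgeCount_eq (u : Perm α) :
    #{u' : Perm α | u'.edgeCount = u.edgeCount} = 2 ^ #(longCycles u) := by
  rw [← card_powerset]
  refine card_bij' (fun u' _ => reversedCycles u u') (fun T _ => reverseCycles u T)
    (fun u' _ => mem_powerset.mpr (filter_subset _ _))
    (fun T _ => mem_filter.mpr ⟨mem_univ _, edgeCount_reverseCycles u T⟩)
    (fun u' hu' => ?_) (fun T hT => reversedCycles_reverseCycles (mem_powerset.mp hT))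
  exact (sameNeighbors_of_edgeCount_eq (mem_filter.mp hu').2).eq_reverseCycles

end Edges

end Equiv.Perm

theorem stmt10_general (r : ℕ)
    (N : Matrix (Fin r) (Fin r) (MvPolynomial (Fin r × Fin r) ℤ))
    (hN : ∀ i j, N i j = MvPolynomial.X (min i j, max i j))
    (u : Equiv.Perm (Fin r)) :
    (Finset.univ.filter (fun u' : Equiv.Perm (Fin r) =>
        ∏ j : Fin r, N j (u' j) = ∏ j : Fin r, N j (u j))).card =
      2 ^ (u.cycleFactorsFinset.filter (fun c => 3 ≤ c.support.card)).card := by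
  have hprod (v : Perm (Fin r)) : ∏ j, N j (v j) = ∏ j, X (v.edge j) := by
    simp only [hN, edge]
  simp only [hprod, prod_X_edge_eq_iff]
  exact card_edgeCount_eq u

/-- For the generic symmetric matrix `N i j = x_{min(i,j), max(i,j)}` over `ℤ`
and a fixed permutation `u ∈ S_r`, the number of permutations `u'` with
`∏ j, N j (u' j) = ∏ j, N j (u j)` is `2^k`, where `k` is the number of cycles
of `u` of length at least `3`. -/
theorem stmt10 (r : ℕ) (hr : 1 ≤ r)
    (N : Matrix (Fin r) (Fin r) (MvPolynomial (Fin r × Fin r) ℤ))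
    (hN : ∀ i j, N i j = MvPolynomial.X (min i j, max i j))
    (u : Equiv.Perm (Fin r)) :
    (Finset.univ.filter (fun u' : Equiv.Perm (Fin r) =>
        ∏ j : Fin r, N j (u' j) = ∏ j : Fin r, N j (u j))).card =
      2 ^ (u.cycleFactorsFinset.filter (fun c => 3 ≤ c.support.card)).card :=
  stmt10_general r N hN u
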